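/- For all f, g ∈ F₃, the element f ⋄ g satisfies f ⋄ g = φ_{l(f)}(g) · f = f · φ_{f(l(f))}(g), where f(l(f)) denotes the address of the image interval f(I_{l(f)}). -/

import Mathlib

open Set
open scoped Classical

noncomputable section

/-- An address: a finite word in the alphabet `{0,1,2}`. -/
abbrev Address : Type := List (Fin 3)

/-- Left endpoint of the triadic interval `I_α`. -/
def addrLeft : Address → ℝ
  | [] => 0
  | i :: α => ((i : ℕ) : ℝ) / 3 + addrLeft α / 3

/-- Length of the triadic interval `I_α`. -/
def addrLen (α : Address) : ℝ := (1 / 3 : ℝ) ^ α.length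

/-- The triadic subinterval `I_α ⊆ [0,1]` determined by the address `α`. -/
def Iaddr (α : Address) : Set ℝ := Set.Icc (addrLeft α) (addrLeft α + addrLen α)

/-- The linear orientation-preserving isomorphism `ψ_α : I_α → [0,1]`. -/
def psi (α : Address) (t : ℝ) : ℝ := (t - addrLeft α) / addrLen α

/-- The inverse `ψ_α⁻¹ : [0,1] → I_α`. -/
def psiInv (α : Address) (t : ℝ) : ℝ := addrLeft α + addrLen α * t

/-- `φ_α(f)` acts as `ψ_α⁻¹ ∘ f ∘ ψ_α` on `I_α` and as the identity elsewhere. -/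
def phi (α : Address) (f : ℝ → ℝ) : ℝ → ℝ :=
  fun t => if t ∈ Iaddr α then psiInv α (f (psi α t)) else t

/-- A triadic rational. -/
def IsTriadic (q : ℝ) : Prop := ∃ a : ℤ, ∃ n : ℕ, q = (a : ℝ) / 3 ^ n

/-- Membership in the Brown–Thompson group `F₃`, realized as piecewise-linear
homeomorphisms of `[0,1]` (extended by the identity to all of `ℝ`) with breakpoints
at triadic rationals and slopes powers of `3`. The group product is `f·g = g ∘ f`. -/
def IsF3 (f : ℝ → ℝ) : Prop :=
  (∀ t, t ∉ Set.Icc (0 : ℝ) 1 → f t = t) ∧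
  Set.BijOn f (Set.Icc 0 1) (Set.Icc 0 1) ∧
  StrictMonoOn f (Set.Icc 0 1) ∧
  ∃ breaks : Finset ℝ, (∀ b ∈ breaks, IsTriadic b) ∧
    ∀ x ∈ Set.Icc (0 : ℝ) 1, x ∉ breaks →
      ∃ (k : ℤ) (c : ℝ), IsTriadic c ∧
        ∀ᶠ y in nhdsWithin x (Set.Icc 0 1), f y = (3 : ℝ) ^ k * y + c

/-- `f` maps `I_α` linearly (preserving orientation, with triadic affine data)
onto the triadic interval `I_β`. -/
def IsTriadicLinearOn (f : ℝ → ℝ) (α β : Address) : Prop :=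
  ∀ t ∈ Iaddr α, f t = psiInv β (psi α t)

/-- The depth of the maximal all-`i` leaf of the reduced domain tree of `f`:
the least `n` such that `f` maps `I_{iⁿ}` linearly onto a triadic interval. -/
def leafExp (i : Fin 3) (f : ℝ → ℝ) : ℕ :=
  sInf {n : ℕ | ∃ β : Address, IsTriadicLinearOn f (List.replicate n i) β}

/-- The address `l(f) = 1ⁿ` of the central leaf of `f` (the leaf of the reduced
domain tree whose interval contains `1/2`). -/
def centralLeaf (f : ℝ → ℝ) : Address := List.replicate (leafExp 1 f) 1

/-- The central monoid operation `f ⋄ g = φ_{l(f)}(g) · f` (recall `a·b = b ∘ a`). -/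
def diam (f g : ℝ → ℝ) : ℝ → ℝ := fun t => f (phi (centralLeaf f) g t)

/-!
On `I_{l(f)}` the element `f` is the affine map `ψ_β⁻¹ ∘ ψ_{l(f)}`, so it conjugates
`φ_{l(f)}(g) = ψ_{l(f)}⁻¹ ∘ g ∘ ψ_{l(f)}` into `φ_β(g) = ψ_β⁻¹ ∘ g ∘ ψ_β`. Off `I_{l(f)}`
both sides reduce to `f`: since `f` is increasing on `[0,1]`, sends the endpoints of
`I_{l(f)}` to those of `I_β` and fixes everything outside `[0,1]`, it maps the
complement of `I_{l(f)}` into the complement of `I_β`, where `φ_β(g)` is the identity.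
-/

lemma addrLen_pos (α : Address) : 0 < addrLen α := by
  unfold addrLen; positivity

lemma addrLeft_nonneg (α : Address) : 0 ≤ addrLeft α := by
  induction α with
  | nil => simp [addrLeft]
  | cons i α ih => simp only [addrLeft]; positivity

lemma addrLeft_add_addrLen_le_one (α : Address) : addrLeft α + addrLen α ≤ 1 := by
  induction α with
  | nil => simp [addrLeft, addrLen]
  | cons i α ih =>
    have hi : ((i : ℕ) : ℝ) ≤ 2 := by exact_mod_cast Nat.le_of_lt_succ i.is_lt
    have hlen : addrLen (i :: α) = addrLen α / 3 := by
      simp only [addrLen, List.length_cons, pow_succ]; ring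
    rw [hlen, addrLeft]
    linarith

lemma Iaddr_subset_Icc (α : Address) : Iaddr α ⊆ Icc 0 1 :=
  Icc_subset_Icc (addrLeft_nonneg α) (addrLeft_add_addrLen_le_one α)

lemma psi_mem_Icc {α : Address} {t : ℝ} (ht : t ∈ Iaddr α) : psi α t ∈ Icc (0 : ℝ) 1 := by
  have hl := addrLen_pos α
  refine ⟨div_nonneg (by linarith [ht.1]) hl.le, ?_⟩
  rw [psi, div_le_one hl]
  linarith [ht.2]

lemma psiInv_mem_Iaddr {α : Address} {x : ℝ} (hx : x ∈ Icc (0 : ℝ) 1) :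
    psiInv α x ∈ Iaddr α := by
  have hl := addrLen_pos α
  exact ⟨by rw [psiInv]; nlinarith [hx.1], by rw [psiInv]; nlinarith [hx.2]⟩

lemma psi_psiInv (α : Address) (x : ℝ) : psi α (psiInv α x) = x := by
  rw [psi, psiInv, add_sub_cancel_left, mul_div_cancel_left₀ x (addrLen_pos α).ne']

namespace IsTriadicLinearOn

variable {f : ℝ → ℝ} {α β : Address}

lemma apply_addrLeft (h : IsTriadicLinearOn f α β) : f (addrLeft α) = addrLeft β := by
  rw [h _ ⟨le_rfl, by linarith [addrLen_pos α]⟩, psi, psiInv]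
  simp

lemma apply_addrLeft_add_addrLen (h : IsTriadicLinearOn f α β) :
    f (addrLeft α + addrLen α) = addrLeft β + addrLen β := by
  rw [h _ ⟨by linarith [addrLen_pos α], le_rfl⟩, psi, psiInv, add_sub_cancel_left,
    div_self (addrLen_pos α).ne', mul_one]

lemma mem_Iaddr_of_apply_mem (h : IsTriadicLinearOn f α β)
    (hfix : ∀ t, t ∉ Icc (0 : ℝ) 1 → f t = t) (hmono : StrictMonoOn f (Icc 0 1))
    {t : ℝ} (hft : f t ∈ Iaddr β) : t ∈ Iaddr α := by
  by_cases htI : t ∈ Icc (0 : ℝ) 1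
  · have hleft := Iaddr_subset_Icc α (a := addrLeft α) ⟨le_rfl, by linarith [addrLen_pos α]⟩
    have hright := Iaddr_subset_Icc α (a := addrLeft α + addrLen α)
      ⟨by linarith [addrLen_pos α], le_rfl⟩
    constructor
    · by_contra! hlt
      have := hmono htI hleft hlt
      rw [h.apply_addrLeft] at this
      exact absurd hft.1 (not_le.mpr this)
    · by_contra! hgt
      have := hmono hright htI hgt
      rw [h.apply_addrLeft_add_addrLen] at this
      exact absurd hft.2 (not_le.mpr this)
  · exact absurd (Iaddr_subset_Icc β (hfix t htI ▸ hft)) htI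

lemma apply_phi_of_mem (h : IsTriadicLinearOn f α β) {g : ℝ → ℝ}
    (hg : MapsTo g (Icc 0 1) (Icc 0 1)) {t : ℝ} (ht : t ∈ Iaddr α) :
    f (phi α g t) = phi β g (f t) := by
  have hft : f t ∈ Iaddr β := h t ht ▸ psiInv_mem_Iaddr (psi_mem_Icc ht)
  rw [phi, if_pos ht, phi, if_pos hft, h _ (psiInv_mem_Iaddr (hg (psi_mem_Icc ht))),
    psi_psiInv, h t ht, psi_psiInv]

end IsTriadicLinearOn

/-- `f ⋄ g = φ_{l(f)}(g) · f = f · φ_{f(l(f))}(g)`, where `f(l(f))` is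
the address `β` of the image interval `f(I_{l(f)})` (the product is `a·b = b∘a`). -/
theorem diam_eq_phi_mul (f g : ℝ → ℝ) (hf : IsF3 f) (hg : IsF3 g)
    (β : Address) (hβ : IsTriadicLinearOn f (centralLeaf f) β) :
    diam f g = (fun t => f (phi (centralLeaf f) g t)) ∧
    diam f g = (fun t => phi β g (f t)) := by
  refine ⟨rfl, funext fun t => ?_⟩
  by_cases ht : t ∈ Iaddr (centralLeaf f)
  · exact hβ.apply_phi_of_mem hg.2.1.mapsTo ht
  · have hft : f t ∉ Iaddr β := fun h => ht (hβ.mem_Iaddr_of_apply_mem hf.1 hf.2.2.1 h)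
    simp only [diam, phi, if_neg ht, if_neg hft]
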